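/- Let Γ ⊂ ℂⁿ be compact. The union Σ of all p-pseudoconcave subsets of ℂⁿ \ Γ which are bounded in ℂⁿ is itself a bounded p-pseudoconcave subset of ℂⁿ \ Γ, hence the largest element of this family. -/

import Mathlib

open MeasureTheory Metric Set Filter Bornology Topology

noncomputable section

/-- `ℂⁿ` with its Euclidean structure. -/
abbrev CSp (n : ℕ) := EuclideanSpace ℂ (Fin n)

instance (n : ℕ) : MeasureSpace (CSp n) :=
  ⟨(volume : Measure (∀ _ : Fin n, ℂ)).map (WithLp.toLp 2)⟩
instance (n : ℕ) : BorelSpace (CSp n) := (inferInstance : BorelSpace (PiLp 2 (fun _ : Fin n => ℂ)))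
/-- The union of the unbounded connected components of the complement of `K` in `ℂᵖ`. -/
def unbddCompl {p : ℕ} (K : Set (CSp p)) : Set (CSp p) :=
  ⋃₀ {C | C ⊆ Kᶜ ∧ IsConnected C ∧ ¬Bornology.IsBounded C}

/-- `U` is relatively open in `V`. -/
def RelOpen {n : ℕ} (V U : Set (CSp n)) : Prop := ∃ O, IsOpen O ∧ U = V ∩ O

/-- `f` is holomorphic along `V` on `W ⊆ V`: near each point of `W` it extends to a
holomorphic map of a full neighbourhood in `ℂⁿ` (for `V` open this is just holomorphy on `W`;
for `V` a submanifold this is the usual notion of holomorphy on `V`). -/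
def HolomorphicAlong {n q : ℕ} (V W : Set (CSp n)) (f : CSp n → CSp q) : Prop :=
  ∀ a ∈ W, ∃ O : Set (CSp n), IsOpen O ∧ a ∈ O ∧
    ∃ g : CSp n → CSp q, DifferentiableOn ℂ g O ∧ ∀ x ∈ O ∩ V, g x = f x

/-- `X` is a `p`-pseudoconcave subset of (the complex manifold) `V`: `X` is closed in `V` and
for every relatively open `U ⊂⊂ V` and every holomorphic map `f` from a neighbourhood of the
closure of `U` (in `V`) into `ℂᵖ`, `f(X ∩ U)` avoids the unbounded component of
`ℂᵖ \ f(X ∩ ∂U)`, where `∂U = closure U \ U` is the boundary of `U` in `V`. -/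
def IsPseudoconcave {n : ℕ} (p : ℕ) (V X : Set (CSp n)) : Prop :=
  X ⊆ V ∧ (V ∩ closure X ⊆ X) ∧
  ∀ U : Set (CSp n), RelOpen V U → IsCompact (closure U) → closure U ⊆ V →
    ∀ W : Set (CSp n), RelOpen V W → closure U ⊆ W →
      ∀ f : CSp n → CSp p, HolomorphicAlong V W f →
        f '' (X ∩ U) ⊆ (unbddCompl (f '' (X ∩ (closure U \ U))))ᶜ

/-!
Pseudoconcave sets obey a maximum principle for the real parts of holomorphic functions:
if `Re fᵢ` were larger at a point of `X ∩ U` than everywhere on `X ∩ ∂U`, that point would lie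
in an unbounded half-space avoiding `f(X ∩ ∂U)`. Applied to `x ↦ ⟪x₀, x⟫` at a point `x₀` of
maximal norm, this confines every bounded pseudoconcave subset of `ℂⁿ \ Γ` to any ball about `0`
containing `Γ`, so `Σ` is bounded. The avoidance condition passes to unions directly, and to
relative closures because `unbddCompl K` is open for closed `K`; so the relative closure of `Σ`
is again a member of the family, hence equals `Σ`.
-/

def AvoidsUnbddCompl {n : ℕ} (p : ℕ) (V X : Set (CSp n)) : Prop :=
  ∀ U : Set (CSp n), RelOpen V U → IsCompact (closure U) → closure U ⊆ V →
    ∀ W : Set (CSp n), RelOpen V W → closure U ⊆ W →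
      ∀ f : CSp n → CSp p, HolomorphicAlong V W f →
        f '' (X ∩ U) ⊆ (unbddCompl (f '' (X ∩ (closure U \ U))))ᶜ

theorem isPseudoconcave_iff {n p : ℕ} {V X : Set (CSp n)} :
    IsPseudoconcave p V X ↔ X ⊆ V ∧ V ∩ closure X ⊆ X ∧ AvoidsUnbddCompl p V X :=
  Iff.rfl

section unbddCompl

variable {p : ℕ}

theorem unbddCompl_anti {K₁ K₂ : Set (CSp p)} (h : K₁ ⊆ K₂) :
    unbddCompl K₂ ⊆ unbddCompl K₁ := by
  rintro z ⟨C, ⟨hCK, hC, hCb⟩, hzC⟩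
  exact ⟨C, ⟨hCK.trans (compl_subset_compl.2 h), hC, hCb⟩, hzC⟩

theorem isOpen_unbddCompl {K : Set (CSp p)} (hK : IsClosed K) : IsOpen (unbddCompl K) := by
  rw [Metric.isOpen_iff]
  rintro z ⟨C, ⟨hCK, hC, hCb⟩, hzC⟩
  obtain ⟨ρ, hρ, hball⟩ := Metric.isOpen_iff.1 hK.isOpen_compl z (hCK hzC)
  refine ⟨ρ, hρ, fun w hw => ⟨C ∪ ball z ρ, ⟨union_subset hCK hball, ?_, ?_⟩, Or.inr hw⟩⟩
  · exact hC.union ⟨z, hzC, mem_ball_self hρ⟩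
      ((convex_ball z ρ).isConnected (nonempty_ball.2 hρ))
  · exact fun hb => hCb (hb.subset subset_union_left)

theorem convex_setOf_le_re_apply (i : Fin p) (a : ℝ) :
    Convex ℝ {w : CSp p | a ≤ (w i).re} :=
  convex_halfSpace_ge ⟨fun x y => by simp, fun c x => by simp⟩ a

theorem not_isBounded_setOf_le_re_apply (i : Fin p) (a : ℝ) :
    ¬IsBounded {w : CSp p | a ≤ (w i).re} := by
  intro h
  obtain ⟨r, hr⟩ := h.subset_closedBall 0
  set t := max a (r + 1)
  have ht : EuclideanSpace.single i (t : ℂ) ∈ closedBall 0 r := hr (by simp [t])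
  rw [mem_closedBall_zero_iff, PiLp.norm_single, Complex.norm_real, Real.norm_eq_abs] at ht
  linarith [le_abs_self t, le_max_right a (r + 1)]

theorem mem_unbddCompl_of_forall_re_lt {K : Set (CSp p)} {z : CSp p} (i : Fin p)
    (hK : ∀ w ∈ K, (w i).re < (z i).re) : z ∈ unbddCompl K := by
  have hz : z ∈ {w : CSp p | (z i).re ≤ (w i).re} := le_refl (z i).re
  exact ⟨_, ⟨fun w hw hwK => (hK w hwK).not_ge hw,
    (convex_setOf_le_re_apply i _).isConnected ⟨z, hz⟩, not_isBounded_setOf_le_re_apply i _⟩, hz⟩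

end unbddCompl

section HolomorphicAlong

variable {n q : ℕ} {V W : Set (CSp n)} {f : CSp n → CSp q}

theorem relOpen_self (V : Set (CSp n)) : RelOpen V V :=
  ⟨univ, isOpen_univ, (inter_univ V).symm⟩

theorem Differentiable.holomorphicAlong (hf : Differentiable ℂ f) : HolomorphicAlong V W f :=
  fun a _ => ⟨univ, isOpen_univ, mem_univ a, f, hf.differentiableOn, fun _ _ => rfl⟩

theorem HolomorphicAlong.continuousWithinAt (hf : HolomorphicAlong V W f) {a : CSp n}
    (haV : a ∈ V) (haW : a ∈ W) : ContinuousWithinAt f V a := by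
  obtain ⟨O, hO, haO, g, hg, hgf⟩ := hf a haW
  have hga : ContinuousAt g a := (hg.differentiableAt (hO.mem_nhds haO)).continuousAt
  refine hga.continuousWithinAt.congr_of_eventuallyEq ?_ (hgf a ⟨haO, haV⟩).symm
  filter_upwards [inter_mem_nhdsWithin V (hO.mem_nhds haO)] with x hx
  exact (hgf x ⟨hx.2, hx.1⟩).symm

end HolomorphicAlong

theorem isClosed_closure_diff_inter {α : Type*} [TopologicalSpace α] {V O : Set α}
    (hO : IsOpen O) (hV : closure (V ∩ O) ⊆ V) : IsClosed (closure (V ∩ O) \ (V ∩ O)) := by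
  rw [sdiff_inter, sdiff_eq_empty.2 hV, empty_union]
  exact isClosed_closure.sdiff hO

section Pseudoconcave

variable {n p : ℕ} {V X : Set (CSp n)}

theorem AvoidsUnbddCompl.sUnion {𝒮 : Set (Set (CSp n))}
    (h𝒮 : ∀ X ∈ 𝒮, AvoidsUnbddCompl p V X) : AvoidsUnbddCompl p V (⋃₀ 𝒮) := by
  intro U hU hUc hUV W hW hUW f hf
  rintro _ ⟨x, ⟨⟨X, hX𝒮, hxX⟩, hxU⟩, rfl⟩ hfx
  have hsub : X ∩ (closure U \ U) ⊆ ⋃₀ 𝒮 ∩ (closure U \ U) :=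
    inter_subset_inter_left _ (subset_sUnion_of_mem hX𝒮)
  exact h𝒮 X hX𝒮 U hU hUc hUV W hW hUW f hf (mem_image_of_mem f ⟨hxX, hxU⟩)
    (unbddCompl_anti (image_mono hsub) hfx)

theorem AvoidsUnbddCompl.inter_closure (hXV : X ⊆ V) (hX : AvoidsUnbddCompl p V X) :
    AvoidsUnbddCompl p V (V ∩ closure X) := by
  rintro _ ⟨O, hO, rfl⟩ hUc hUV W hW hUW f hf
  rintro _ ⟨y, ⟨⟨hyV, hyX⟩, hyU⟩, rfl⟩ hfy
  set B := closure (V ∩ O) \ (V ∩ O)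
  have hBV : B ⊆ V := fun b hb => hUV hb.1
  have hfB : ContinuousOn f (closure X ∩ B) := fun a ha =>
    (hf.continuousWithinAt (hBV ha.2) (hUW ha.2.1)).mono fun b hb => hBV hb.2
  have hK : IsCompact (f '' (closure X ∩ B)) :=
    (hUc.of_isClosed_subset (isClosed_closure.inter (isClosed_closure_diff_inter hO hUV))
      fun b hb => hb.2.1).image_of_continuousOn hfB
  have hfyK : f y ∈ unbddCompl (f '' (closure X ∩ B)) :=
    unbddCompl_anti (image_mono (t := V ∩ closure X ∩ B) fun b hb => ⟨⟨hBV hb.2, hb.1⟩, hb.2⟩) hfy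
  -- `f y` lies in an open set of values that `f` must avoid on `X ∩ U`, and `X` accumulates at `y`.
  have hN : f ⁻¹' unbddCompl (f '' (closure X ∩ B)) ∈ 𝓝[V] y :=
    hf.continuousWithinAt hyV (hUW (subset_closure hyU))
      ((isOpen_unbddCompl hK.isClosed).mem_nhds hfyK)
  have hUy : V ∩ O ∈ 𝓝[V] y := inter_mem_nhdsWithin V (hO.mem_nhds hyU.2)
  have := mem_closure_iff_nhdsWithin_neBot.1 hyX
  obtain ⟨x, ⟨hxU, hfx⟩, hxX⟩ := Filter.nonempty_of_mem
    (inter_mem (nhdsWithin_mono y hXV (inter_mem hUy hN)) self_mem_nhdsWithin)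
  exact hX _ ⟨O, hO, rfl⟩ hUc hUV W hW hUW f hf (mem_image_of_mem f ⟨hxX, hxU⟩)
    (unbddCompl_anti (image_mono (inter_subset_inter_left _ subset_closure)) hfx)

theorem AvoidsUnbddCompl.exists_boundary_re_ge (hX : AvoidsUnbddCompl p V X) {U : Set (CSp n)}
    (hU : RelOpen V U) (hUc : IsCompact (closure U)) (hUV : closure U ⊆ V)
    {f : CSp n → CSp p} (hf : Differentiable ℂ f) (i : Fin p) {x₀ : CSp n}
    (hx₀ : x₀ ∈ X ∩ U) : ∃ x ∈ X ∩ (closure U \ U), (f x₀ i).re ≤ (f x i).re := by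
  by_contra! h
  refine hX U hU hUc hUV V (relOpen_self V) hUV f hf.holomorphicAlong (mem_image_of_mem f hx₀)
    (mem_unbddCompl_of_forall_re_lt i ?_)
  rintro _ ⟨x, hx, rfl⟩
  exact h x hx

theorem isPseudoconcave_inter_closure (hXV : X ⊆ V) (hX : AvoidsUnbddCompl p V X) :
    IsPseudoconcave p V (V ∩ closure X) := by
  refine isPseudoconcave_iff.2 ⟨inter_subset_left, fun x hx => ⟨hx.1, ?_⟩, hX.inter_closure hXV⟩
  exact closure_closure (s := X) ▸ closure_mono inter_subset_right hx.2

theorem AvoidsUnbddCompl.exists_mem_diff_cap_re_ge (hp : 1 ≤ p) {Γ : Set (CSp n)}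
    (hX : AvoidsUnbddCompl p Γᶜ X) (ℓ : CSp n →L[ℂ] ℂ) {ρ c : ℝ} (hΓ : ∀ x ∈ Γ, (ℓ x).re < c)
    {x₀ : CSp n} (hx₀X : x₀ ∈ X) (hx₀ : x₀ ∈ ball 0 ρ ∩ {x | c < (ℓ x).re}) :
    ∃ x ∈ X \ (ball 0 ρ ∩ {x | c < (ℓ x).re}), (ℓ x₀).re ≤ (ℓ x).re := by
  set U := ball (0 : CSp n) ρ ∩ {x | c < (ℓ x).re}
  have hℓ : Continuous fun x => (ℓ x).re := Complex.continuous_re.comp ℓ.continuous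
  have hclU : closure U ⊆ {x | c ≤ (ℓ x).re} :=
    closure_minimal (fun x hx => show c ≤ _ from hx.2.le) (isClosed_le continuous_const hℓ)
  have hclUΓ : closure U ⊆ Γᶜ := fun x hx hxΓ => (hclU hx).not_gt (hΓ x hxΓ)
  have hUrel : RelOpen Γᶜ U :=
    ⟨U, isOpen_ball.inter (isOpen_lt continuous_const hℓ),
      (inter_eq_self_of_subset_right (subset_closure.trans hclUΓ)).symm⟩
  have hUc : IsCompact (closure U) := (isBounded_ball.subset inter_subset_left).isCompact_closure
  obtain ⟨x, ⟨hxX, -, hxU⟩, hx⟩ := hX.exists_boundary_re_ge hUrel hUc hclUΓ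
    (ℓ.differentiable.smul_const (EuclideanSpace.single (⟨0, hp⟩ : Fin p) (1 : ℂ))) ⟨0, hp⟩
    ⟨hx₀X, hx₀⟩
  exact ⟨x, ⟨hxX, hxU⟩, by simpa using hx⟩

theorem IsPseudoconcave.subset_closedBall (hp : 1 ≤ p) {Γ S : Set (CSp n)}
    (hS : IsPseudoconcave p Γᶜ S) (hSb : IsBounded S) {R : ℝ} (hR : 0 ≤ R)
    (hΓ : Γ ⊆ closedBall 0 R) : S ⊆ closedBall 0 R := by
  intro x₁ hx₁
  by_contra hx₁R
  rw [mem_closedBall_zero_iff, not_le] at hx₁R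
  obtain ⟨x₀, hx₀, hmax⟩ := hSb.isCompact_closure.exists_isMaxOn ⟨x₁, subset_closure hx₁⟩
    continuous_norm.continuousOn
  set M := ‖x₀‖
  have hnorm : ∀ y ∈ S, ‖y‖ ≤ M := fun y hy => hmax (subset_closure hy)
  have hRM : R < M := hx₁R.trans_le (hnorm x₁ hx₁)
  have hx₀S : x₀ ∈ S :=
    hS.2.1 ⟨fun hx₀Γ => (mem_closedBall_zero_iff.1 (hΓ hx₀Γ)).not_gt hRM, hx₀⟩
  set ℓ := innerSL ℂ x₀
  have hℓx₀ : (ℓ x₀).re = M ^ 2 := inner_self_eq_norm_sq (𝕜 := ℂ) x₀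
  -- On `S` the function `Re ℓ` peaks at `x₀`, with value `M ^ 2`, while on `Γ` it is `≤ M * R`.
  set c := M * (M + R) / 2
  have hgap : 0 < M * (M - R) := mul_pos (hR.trans_lt hRM) (sub_pos.2 hRM)
  have hcM : c < M ^ 2 := by simp only [c]; nlinarith
  have hRc : M * R < c := by simp only [c]; nlinarith
  have hΓc : ∀ x ∈ Γ, (ℓ x).re < c := fun x hx =>
    calc (ℓ x).re ≤ M * ‖x‖ := re_inner_le_norm (𝕜 := ℂ) x₀ x
      _ ≤ M * R := by gcongr; exact mem_closedBall_zero_iff.1 (hΓ hx)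
      _ < c := hRc
  obtain ⟨x, ⟨hxS, hxU⟩, hx⟩ := (isPseudoconcave_iff.1 hS).2.2.exists_mem_diff_cap_re_ge hp ℓ hΓc
    hx₀S (ρ := M + 1) ⟨mem_ball_zero_iff.2 (lt_add_one M), show c < _ by rw [hℓx₀]; exact hcM⟩
  refine hxU ⟨mem_ball_zero_iff.2 ((hnorm x hxS).trans_lt (lt_add_one M)), ?_⟩
  exact hcM.trans_le (hℓx₀ ▸ hx)

end Pseudoconcave

/-- For `Γ ⊆ ℂⁿ` compact, the union `Σ` of all `p`-pseudoconcave subsets of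
`ℂⁿ \ Γ` that are bounded in `ℂⁿ` is itself a bounded `p`-pseudoconcave subset of `ℂⁿ \ Γ`,
hence the largest element of this family. (`Γ ∪ Σ` is the polynomial `p`-hull of `Γ`.) -/
theorem biggest_pseudoconcave {n : ℕ} (p : ℕ) (hp : 1 ≤ p)
    (Γ : Set (CSp n)) (hΓ : IsCompact Γ) :
    IsPseudoconcave p Γᶜ
        (⋃₀ {S | IsPseudoconcave p Γᶜ S ∧ Bornology.IsBounded S}) ∧
      Bornology.IsBounded (⋃₀ {S | IsPseudoconcave p Γᶜ S ∧ Bornology.IsBounded S}) ∧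
      ∀ S, IsPseudoconcave p Γᶜ S → Bornology.IsBounded S →
        S ⊆ ⋃₀ {S | IsPseudoconcave p Γᶜ S ∧ Bornology.IsBounded S} := by
  set Sig := ⋃₀ {S | IsPseudoconcave p Γᶜ S ∧ Bornology.IsBounded S}
  obtain ⟨r, hr⟩ := hΓ.isBounded.subset_closedBall 0
  have hΓR : Γ ⊆ closedBall 0 (max r 0) :=
    hr.trans (closedBall_subset_closedBall (le_max_left r 0))
  have hSigR : Sig ⊆ closedBall 0 (max r 0) := sUnion_subset fun S hS =>
    hS.1.subset_closedBall hp hS.2 (le_max_right r 0) hΓR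
  have hSigb : IsBounded Sig := isBounded_closedBall.subset hSigR
  have hSigV : Sig ⊆ Γᶜ := sUnion_subset fun S hS => hS.1.1
  have hSigA : AvoidsUnbddCompl p Γᶜ Sig :=
    AvoidsUnbddCompl.sUnion fun S hS => (isPseudoconcave_iff.1 hS.1).2.2
  have hSigClosed : Γᶜ ∩ closure Sig ⊆ Sig := subset_sUnion_of_mem
    ⟨isPseudoconcave_inter_closure hSigV hSigA, hSigb.closure.subset inter_subset_right⟩
  exact ⟨isPseudoconcave_iff.2 ⟨hSigV, hSigClosed, hSigA⟩, hSigb,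
    fun S hS hSb => subset_sUnion_of_mem ⟨hS, hSb⟩⟩
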